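/- Monotonicity of the effective drift in its own direction: let (u, m, H̄) be a classical solution of the power-type ergodic MFG system with α > 0, let i ∈ {1,…,n}, and let (ũ, m̃, c) be a classical solution of the associated linearized system in direction e_i. Then 1 + ∫_Q ( m̃ ∂u/∂y_i + m ∂ũ/∂y_i ) dy = ∫_Q ( q α^q m^{q−1} m̃² + m |∇ũ + e_i|² ) dy, and in particular this quantity (which equals ∂b̄/∂P_i · e_i) is nonnegative. -/

import Mathlib

open MeasureTheory Real

/-- Partial derivative in direction `i`. -/
noncomputable def pd {n : ℕ} (i : Fin n) (f : (Fin n → ℝ) → ℝ) (x : Fin n → ℝ) : ℝ :=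
  fderiv ℝ f x (Pi.single i 1)

/-- Laplacian: sum of second partial derivatives. -/
noncomputable def lap {n : ℕ} (f : (Fin n → ℝ) → ℝ) (x : Fin n → ℝ) : ℝ :=
  ∑ i, pd i (pd i f) x

/-- Divergence of a vector field. -/
noncomputable def dvg {n : ℕ} (F : (Fin n → ℝ) → Fin n → ℝ) (x : Fin n → ℝ) : ℝ :=
  ∑ i, pd i (fun y => F y i) x

/-- `ℤⁿ`-periodicity. -/
def ZPeriodic {n : ℕ} (f : (Fin n → ℝ) → ℝ) : Prop :=
  ∀ (k : Fin n → ℤ) (x : Fin n → ℝ), f (x + fun i => (k i : ℝ)) = f x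

/-- The unit cube `Q = [0,1]ⁿ`. -/
def unitCube (n : ℕ) : Set (Fin n → ℝ) := Set.Icc 0 1

/-- A classical solution `(u, m, H)` of the power-type ergodic MFG system
`-Δu + ½|∇u+P|² - v - αᑫ mᑫ = H`, `-Δm - div(m(∇u+P)) = 0`, `∫ u = 0`, `∫ m = 1`. -/
structure PowerMFG {n : ℕ} (v : (Fin n → ℝ) → ℝ) (P : Fin n → ℝ) (α q : ℝ)
    (u m : (Fin n → ℝ) → ℝ) (H : ℝ) : Prop where
  hu : ContDiff ℝ 2 u
  hm : ContDiff ℝ 2 m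
  hup : ZPeriodic u
  hmp : ZPeriodic m
  hmpos : ∀ x, 0 < m x
  hHJB : ∀ x, -lap u x + (∑ i, (pd i u x + P i) ^ 2) / 2 - v x - α ^ q * (m x) ^ q = H
  hFP : ∀ x, -lap m x - dvg (fun y j => m y * (pd j u y + P j)) x = 0
  humean : (∫ y in unitCube n, u y) = 0
  hmmean : (∫ y in unitCube n, m y) = 1

/-- A classical solution `(ũ, m̃, c)` of the system obtained linearizing the power-type
ergodic MFG system in the direction `e i`. -/
structure LinPowerMFG {n : ℕ} (P : Fin n → ℝ) (α q : ℝ)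
    (u m : (Fin n → ℝ) → ℝ) (i : Fin n)
    (ut mt : (Fin n → ℝ) → ℝ) (c : ℝ) : Prop where
  hut : ContDiff ℝ 2 ut
  hmt : ContDiff ℝ 2 mt
  hutp : ZPeriodic ut
  hmtp : ZPeriodic mt
  heq1 : ∀ x, -lap ut x + (∑ j, pd j ut x * (pd j u x + P j)) + (pd i u x + P i)
      - q * α ^ q * (m x) ^ (q - 1) * mt x = c
  heq2 : ∀ x, -lap mt x - dvg (fun y j => (pd j u y + P j) * mt y) x
      = dvg (fun y j => m y * (pd j ut y + (Pi.single i 1 : Fin n → ℝ) j)) x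
  hutmean : (∫ y in unitCube n, ut y) = 0
  hmtmean : (∫ y in unitCube n, mt y) = 0

section Helpers

lemma pd_contDiff {n : ℕ} {f : (Fin n → ℝ) → ℝ} (hf : ContDiff ℝ 2 f) (j : Fin n) :
    ContDiff ℝ 1 (pd j f) :=
  (ContinuousLinearMap.apply ℝ ℝ ((Pi.single j 1 : Fin n → ℝ))).contDiff.comp
    (hf.fderiv_right (by norm_num))

lemma pd_mul {n : ℕ} {f g : (Fin n → ℝ) → ℝ} {x : Fin n → ℝ}
    (hf : DifferentiableAt ℝ f x) (hg : DifferentiableAt ℝ g x) (j : Fin n) :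
    pd j (fun y => f y * g y) x = pd j f x * g x + f x * pd j g x := by
  unfold pd
  rw [fderiv_fun_mul hf hg]
  simp; ring

lemma pd_sub {n : ℕ} {f g : (Fin n → ℝ) → ℝ} {x : Fin n → ℝ}
    (hf : DifferentiableAt ℝ f x) (hg : DifferentiableAt ℝ g x) (j : Fin n) :
    pd j (fun y => f y - g y) x = pd j f x - pd j g x := by
  unfold pd
  rw [fderiv_fun_sub hf hg]; simp

lemma pd_add_const {n : ℕ} {f : (Fin n → ℝ) → ℝ} {x : Fin n → ℝ} (c : ℝ) (j : Fin n) :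
    pd j (fun y => f y + c) x = pd j f x := by
  unfold pd; rw [fderiv_add_const]

lemma ZPeriodic.pd_per {n : ℕ} {f : (Fin n → ℝ) → ℝ} (hp : ZPeriodic f) (hf : ContDiff ℝ 2 f)
    (j : Fin n) : ZPeriodic (pd j f) := by
  intro k x
  have hdiff : Differentiable ℝ f := hf.differentiable (by norm_num)
  have h1 : HasFDerivAt (fun y => f (y + fun i => (k i : ℝ)))
      (fderiv ℝ f (x + fun i => (k i : ℝ))) x := by
    have := (hdiff (x + fun i => (k i : ℝ))).hasFDerivAt
    have h2 : HasFDerivAt (fun y : Fin n → ℝ => y + fun i => (k i : ℝ))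
        (ContinuousLinearMap.id ℝ (Fin n → ℝ)) x := (hasFDerivAt_id x).add_const _
    have h3 := this.comp x h2
    rw [ContinuousLinearMap.comp_id] at h3
    exact h3
  have hk : (fun y => f (y + fun i => (k i : ℝ))) = f := funext fun y => hp k y
  rw [hk] at h1
  unfold pd
  rw [h1.fderiv]

lemma ZPeriodic.mul' {n : ℕ} {f g : (Fin n → ℝ) → ℝ} (hf : ZPeriodic f) (hg : ZPeriodic g) :
    ZPeriodic (fun y => f y * g y) := fun k x => by simp [hf k x, hg k x]

lemma ZPeriodic.sub' {n : ℕ} {f g : (Fin n → ℝ) → ℝ} (hf : ZPeriodic f) (hg : ZPeriodic g) :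
    ZPeriodic (fun y => f y - g y) := fun k x => by simp [hf k x, hg k x]

lemma ZPeriodic.addc {n : ℕ} {f : (Fin n → ℝ) → ℝ} (hf : ZPeriodic f) (c : ℝ) :
    ZPeriodic (fun y => f y + c) := fun k x => by simp [hf k x]

lemma insertNth_one_eq {k : ℕ} (i : Fin (k+1)) (x : Fin k → ℝ) :
    i.insertNth 1 x = i.insertNth 0 x + fun j => (((Pi.single i 1 : Fin (k+1) → ℤ) j : ℝ)) := by
  funext j
  refine Fin.succAboveCases i ?_ ?_ j
  · simp
  · intro l
    simp [Fin.insertNth_apply_succAbove, Pi.single_eq_of_ne (Fin.succAbove_ne i l)]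

lemma integral_dvg_eq_zero {n : ℕ} (F : (Fin n → ℝ) → Fin n → ℝ)
    (hF : ∀ j, ContDiff ℝ 1 fun y => F y j)
    (hFp : ∀ j, ZPeriodic fun y => F y j) :
    ∫ y in unitCube n, dvg F y = 0 := by
  cases n with
  | zero => simp [dvg]
  | succ k =>
    set f' : (Fin (k+1) → ℝ) → (Fin (k+1) → ℝ) →L[ℝ] (Fin (k+1) → ℝ) :=
      fun x => ContinuousLinearMap.pi fun j => fderiv ℝ (fun y => F y j) x with hf'
    have hder : ∀ x, HasFDerivAt F (f' x) x := by
      intro x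
      apply hasFDerivAt_pi''
      intro j
      have := ((hF j).differentiable one_ne_zero x).hasFDerivAt
      convert this using 1
      exact ContinuousLinearMap.proj_pi _ _
    have hdvg : (fun x => ∑ j, f' x (Pi.single j 1) j) = dvg F := by
      funext x
      simp [dvg, pd, hf']
    have hcont : Continuous (dvg F) := by
      apply continuous_finset_sum
      intro j _
      exact (ContinuousLinearMap.apply ℝ ℝ ((Pi.single j 1 : Fin (k+1) → ℝ))).continuous.comp
        ((hF j).continuous_fderiv one_ne_zero)
    have hInt : IntegrableOn (fun x => ∑ j, f' x (Pi.single j 1) j)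
        (Set.Icc (0 : Fin (k+1) → ℝ) 1) := by
      rw [hdvg]
      exact hcont.continuousOn.integrableOn_compact isCompact_Icc
    have key := integral_divergence_of_hasFDerivAt_off_countable
      (a := (0 : Fin (k+1) → ℝ)) (b := 1) (fun j => zero_le_one) F f' ∅ Set.countable_empty
      (continuous_pi fun j => ((hF j).continuous)).continuousOn
      (fun x _ => hder x) hInt
    have hfaces : ∀ i : Fin (k+1),
        ((∫ x in Set.Icc ((0 : Fin (k+1) → ℝ) ∘ i.succAbove) ((1 : Fin (k+1) → ℝ) ∘ i.succAbove),
            F (i.insertNth ((1 : Fin (k+1) → ℝ) i) x) i) -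
          ∫ x in Set.Icc ((0 : Fin (k+1) → ℝ) ∘ i.succAbove) ((1 : Fin (k+1) → ℝ) ∘ i.succAbove),
            F (i.insertNth ((0 : Fin (k+1) → ℝ) i) x) i) = 0 := by
      intro i
      have h3 : ∀ x : Fin k → ℝ, F (i.insertNth (1:ℝ) x) i
          = F (i.insertNth (0:ℝ) x) i := by
        intro x
        have h := hFp i (Pi.single i 1 : Fin (k+1) → ℤ) (i.insertNth 0 x)
        rw [insertNth_one_eq i x]; exact h
      simp only [Pi.one_apply, Pi.zero_apply, h3, sub_self]
    rw [unitCube, ← hdvg, key]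
    exact Finset.sum_eq_zero fun i _ => hfaces i

end Helpers

/-- Monotonicity of the effective drift in its own direction (power case). -/
theorem lin_power_mfg_drift_monotone {n : ℕ} (hn : 1 ≤ n)
    (v : (Fin n → ℝ) → ℝ) (hv0 : ∀ x, 0 ≤ v x) (hvlip : ∃ K, LipschitzWith K v) (hvper : ZPeriodic v)
    (P : Fin n → ℝ) (α q : ℝ) (hα : 0 < α) (hq : 0 < q)
    (u m : (Fin n → ℝ) → ℝ) (H : ℝ)
    (h : PowerMFG v P α q u m H)
    (i : Fin n) (ut mt : (Fin n → ℝ) → ℝ) (c : ℝ)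
    (hlin : LinPowerMFG P α q u m i ut mt c) :
    (1 + ∫ y in unitCube n, (mt y * pd i u y + m y * pd i ut y))
      = ∫ y in unitCube n,
          (q * α ^ q * (m y) ^ (q - 1) * (mt y) ^ 2
            + m y * ∑ j, (pd j ut y + (Pi.single i 1 : Fin n → ℝ) j) ^ 2)
    ∧ 0 ≤ 1 + ∫ y in unitCube n, (mt y * pd i u y + m y * pd i ut y) := by
  obtain ⟨hu, hm, hup, hmp, hmpos, hHJB, hFP, humean, hmmean⟩ := h
  obtain ⟨hut, hmt, hutp, hmtp, heq1, heq2, hutmean, hmtmean⟩ := hlin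
  -- differentiability and continuity facts
  have hdu : Differentiable ℝ u := hu.differentiable (by norm_num)
  have hdm : Differentiable ℝ m := hm.differentiable (by norm_num)
  have hdut : Differentiable ℝ ut := hut.differentiable (by norm_num)
  have hdmt : Differentiable ℝ mt := hmt.differentiable (by norm_num)
  have cpu : ∀ j, ContDiff ℝ 1 (pd j u) := pd_contDiff hu
  have cpm : ∀ j, ContDiff ℝ 1 (pd j m) := pd_contDiff hm
  have cput : ∀ j, ContDiff ℝ 1 (pd j ut) := pd_contDiff hut
  have cpmt : ∀ j, ContDiff ℝ 1 (pd j mt) := pd_contDiff hmt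
  have dpu : ∀ j, Differentiable ℝ (pd j u) := fun j => (cpu j).differentiable one_ne_zero
  have dpm : ∀ j, Differentiable ℝ (pd j m) := fun j => (cpm j).differentiable one_ne_zero
  have dput : ∀ j, Differentiable ℝ (pd j ut) := fun j => (cput j).differentiable one_ne_zero
  have dpmt : ∀ j, Differentiable ℝ (pd j mt) := fun j => (cpmt j).differentiable one_ne_zero
  have hu1 : ContDiff ℝ 1 u := hu.of_le (by norm_num)
  have hm1 : ContDiff ℝ 1 m := hm.of_le (by norm_num)
  have hut1 : ContDiff ℝ 1 ut := hut.of_le (by norm_num)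
  have hmt1 : ContDiff ℝ 1 mt := hmt.of_le (by norm_num)
  -- the vector field G
  set G : (Fin n → ℝ) → Fin n → ℝ := fun y j =>
    mt y * pd j ut y - ut y * pd j mt y - ut y * mt y * (pd j u y + P j)
      - ut y * m y * (pd j ut y + (Pi.single i 1 : Fin n → ℝ) j) with hGdef
  -- ∫ div G = 0
  have hzero : ∫ y in unitCube n, dvg G y = 0 := by
    apply integral_dvg_eq_zero
    · intro j
      exact (((hmt1.mul (cput j)).sub (hut1.mul (cpmt j))).sub
        ((hut1.mul hmt1).mul ((cpu j).add contDiff_const))).sub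
        ((hut1.mul hm1).mul ((cput j).add contDiff_const))
    · intro j
      exact (((hmtp.mul' (hutp.pd_per hut j)).sub' (hutp.mul' (hmtp.pd_per hmt j))).sub'
        ((hutp.mul' hmtp).mul' ((hup.pd_per hu j).addc (P j)))).sub'
        ((hutp.mul' hmp).mul' ((hutp.pd_per hut j).addc _))
  -- per-coordinate expansion of div G
  have hGj : ∀ (x : Fin n → ℝ) (j : Fin n), pd j (fun y => G y j) x
      = mt x * pd j (pd j ut) x - ut x * pd j (pd j mt) x
        - mt x * (pd j ut x * (pd j u x + P j))
        - ut x * ((pd j u x + P j) * pd j mt x)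
        - (ut x * mt x) * pd j (pd j u) x
        - m x * (pd j ut x * (pd j ut x + (Pi.single i 1 : Fin n → ℝ) j))
        - ut x * (pd j m x * (pd j ut x + (Pi.single i 1 : Fin n → ℝ) j)
            + m x * pd j (pd j ut) x) := by
    intro x j
    have d1 : DifferentiableAt ℝ (fun y => mt y * pd j ut y) x := (hdmt x).mul (dput j x)
    have d2 : DifferentiableAt ℝ (fun y => ut y * pd j mt y) x := (hdut x).mul (dpmt j x)
    have d3 : DifferentiableAt ℝ (fun y => ut y * mt y * (pd j u y + P j)) x :=
      ((hdut x).mul (hdmt x)).mul ((dpu j x).add_const (P j))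
    have d4 : DifferentiableAt ℝ
        (fun y => ut y * m y * (pd j ut y + (Pi.single i 1 : Fin n → ℝ) j)) x :=
      ((hdut x).mul (hdm x)).mul ((dput j x).add_const _)
    have d12 : DifferentiableAt ℝ (fun y => mt y * pd j ut y - ut y * pd j mt y) x := d1.sub d2
    have d123 : DifferentiableAt ℝ
        (fun y => mt y * pd j ut y - ut y * pd j mt y - ut y * mt y * (pd j u y + P j)) x :=
      d12.sub d3
    rw [hGdef]
    rw [pd_sub d123 d4 j, pd_sub d12 d3 j, pd_sub d1 d2 j,
      pd_mul (hdmt x) (dput j x) j, pd_mul (hdut x) (dpmt j x) j,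
      pd_mul (f := fun y => ut y * mt y) ((hdut x).mul (hdmt x))
        ((dpu j x).add_const (P j)) j,
      pd_mul (f := fun y => ut y * m y) ((hdut x).mul (hdm x))
        ((dput j x).add_const _) j,
      pd_mul (hdut x) (hdmt x) j, pd_mul (hdut x) (hdm x) j,
      pd_add_const (P j) j, pd_add_const ((Pi.single i 1 : Fin n → ℝ) j) j]
    ring
  -- expansions of the divergences in the linearized FP equation
  have hE1 : ∀ x, dvg (fun y j => (pd j u y + P j) * mt y) x
      = mt x * lap u x + ∑ j, (pd j u x + P j) * pd j mt x := by
    intro x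
    unfold dvg lap
    rw [Finset.mul_sum, ← Finset.sum_add_distrib]
    refine Finset.sum_congr rfl fun j _ => ?_
    rw [pd_mul ((dpu j x).add_const (P j)) (hdmt x) j, pd_add_const (P j) j]
    ring
  have hE2 : ∀ x, dvg (fun y j => m y * (pd j ut y + (Pi.single i 1 : Fin n → ℝ) j)) x
      = ∑ j, (pd j m x * (pd j ut x + (Pi.single i 1 : Fin n → ℝ) j)
          + m x * pd j (pd j ut) x) := by
    intro x
    unfold dvg
    refine Finset.sum_congr rfl fun j _ => ?_
    rw [pd_mul (hdm x) ((dput j x).add_const _) j, pd_add_const ((Pi.single i 1 : Fin n → ℝ) j) j]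
  -- the pointwise identity
  have hpt : ∀ x, dvg G x
      = mt x * (pd i u x + P i) - q * α ^ q * m x ^ (q - 1) * mt x ^ 2 - c * mt x
        - m x * ∑ j, pd j ut x * (pd j ut x + (Pi.single i 1 : Fin n → ℝ) j) := by
    intro x
    have h2 := heq2 x
    rw [hE1 x, hE2 x] at h2
    have h1 := heq1 x
    have hsum : dvg G x = mt x * lap ut x - ut x * lap mt x
        - mt x * (∑ j, pd j ut x * (pd j u x + P j))
        - ut x * (∑ j, (pd j u x + P j) * pd j mt x)
        - (ut x * mt x) * lap u x
        - m x * (∑ j, pd j ut x * (pd j ut x + (Pi.single i 1 : Fin n → ℝ) j))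
        - ut x * (∑ j, (pd j m x * (pd j ut x + (Pi.single i 1 : Fin n → ℝ) j)
            + m x * pd j (pd j ut) x)) := by
      unfold dvg lap
      rw [Finset.sum_congr rfl fun j (_ : j ∈ Finset.univ) => hGj x j]
      simp only [Finset.sum_sub_distrib, ← Finset.mul_sum]
    rw [hsum]
    set Z := q * α ^ q * m x ^ (q - 1) with hZ
    linear_combination (-(mt x)) * h1 + ut x * h2
  -- integrability facts
  have hci : ∀ {f : (Fin n → ℝ) → ℝ}, Continuous f → IntegrableOn f (unitCube n) := by
    intro f hf
    exact hf.continuousOn.integrableOn_compact isCompact_Icc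
  have cmt : Continuous mt := hmt1.continuous
  have cm : Continuous m := hm1.continuous
  have cut : Continuous ut := hut1.continuous
  have cpdiu : Continuous (pd i u) := (cpu i).continuous
  have cpdiut : Continuous (pd i ut) := (cput i).continuous
  have crpow : Continuous fun y => m y ^ (q - 1) :=
    cm.rpow_const fun y => Or.inl (hmpos y).ne'
  have cS4 : Continuous fun y => ∑ j, pd j ut y * (pd j ut y + (Pi.single i 1 : Fin n → ℝ) j) :=
    continuous_finset_sum _ fun j _ =>
      (cput j).continuous.mul ((cput j).continuous.add continuous_const)
  have cSq : Continuous fun y => ∑ j, (pd j ut y + (Pi.single i 1 : Fin n → ℝ) j) ^ 2 :=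
    continuous_finset_sum _ fun j _ => ((cput j).continuous.add continuous_const).pow 2
  have cg1 : Continuous fun y => q * α ^ q * m y ^ (q - 1) * mt y ^ 2 :=
    (continuous_const.mul crpow).mul (cmt.pow 2)
  -- integrate the pointwise identity
  have hI : ∫ y in unitCube n,
      (mt y * (pd i u y + P i) - q * α ^ q * m y ^ (q - 1) * mt y ^ 2 - c * mt y
        - m y * ∑ j, pd j ut y * (pd j ut y + (Pi.single i 1 : Fin n → ℝ) j)) = 0 := by
    rw [← hzero]
    exact setIntegral_congr_fun (by exact measurableSet_Icc) fun y _ => (hpt y).symm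
  have I1 : IntegrableOn (fun y => mt y * (pd i u y + P i)) (unitCube n) :=
    hci (cmt.mul (cpdiu.add continuous_const))
  have I2 : IntegrableOn (fun y => q * α ^ q * m y ^ (q - 1) * mt y ^ 2) (unitCube n) := hci cg1
  have I3 : IntegrableOn (fun y => c * mt y) (unitCube n) := hci (continuous_const.mul cmt)
  have I4 : IntegrableOn
      (fun y => m y * ∑ j, pd j ut y * (pd j ut y + (Pi.single i 1 : Fin n → ℝ) j))
      (unitCube n) := hci (cm.mul cS4)
  have I12 : IntegrableOn
      (fun y => mt y * (pd i u y + P i) - q * α ^ q * m y ^ (q - 1) * mt y ^ 2)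
      (unitCube n) := I1.sub I2
  have I123 : IntegrableOn
      (fun y => mt y * (pd i u y + P i) - q * α ^ q * m y ^ (q - 1) * mt y ^ 2 - c * mt y)
      (unitCube n) := I12.sub I3
  rw [integral_sub I123 I4, integral_sub I12 I3, integral_sub I1 I2] at hI
  have hc0 : ∫ y in unitCube n, c * mt y = 0 := by
    rw [integral_const_mul, hmtmean, mul_zero]
  have hfirst : ∫ y in unitCube n, mt y * (pd i u y + P i)
      = ∫ y in unitCube n, mt y * pd i u y := by
    have : (fun y => mt y * (pd i u y + P i)) = fun y => mt y * pd i u y + P i * mt y := by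
      funext y; ring
    have J1 : IntegrableOn (fun y => mt y * pd i u y) (unitCube n) := hci (cmt.mul cpdiu)
    have J2 : IntegrableOn (fun y => P i * mt y) (unitCube n) := hci (continuous_const.mul cmt)
    rw [this, integral_add J1 J2, integral_const_mul, hmtmean, mul_zero, add_zero]
  rw [hc0, hfirst, sub_zero] at hI
  -- hI : ∫ mt ∂ᵢu - ∫ g1 - ∫ m·S4 = 0
  have hsq : ∀ y, m y * ∑ j, (pd j ut y + (Pi.single i 1 : Fin n → ℝ) j) ^ 2
      = m y * (∑ j, pd j ut y * (pd j ut y + (Pi.single i 1 : Fin n → ℝ) j))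
        + m y * pd i ut y + m y := by
    intro y
    have e1 : ∑ j, (pd j ut y + (Pi.single i 1 : Fin n → ℝ) j) ^ 2
        = (∑ j, pd j ut y * (pd j ut y + (Pi.single i 1 : Fin n → ℝ) j))
          + ∑ j, (Pi.single i 1 : Fin n → ℝ) j
              * (pd j ut y + (Pi.single i 1 : Fin n → ℝ) j) := by
      rw [← Finset.sum_add_distrib]
      exact Finset.sum_congr rfl fun j _ => by ring
    have e2 : ∑ j, (Pi.single i 1 : Fin n → ℝ) j
        * (pd j ut y + (Pi.single i 1 : Fin n → ℝ) j) = pd i ut y + 1 := by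
      rw [Finset.sum_eq_single i]
      · simp
      · intro b _ hb; simp [Pi.single_eq_of_ne hb]
      · intro hmem; exact absurd (Finset.mem_univ i) hmem
    rw [e1, e2]; ring
  have hRHS : ∫ y in unitCube n,
      (q * α ^ q * (m y) ^ (q - 1) * (mt y) ^ 2
        + m y * ∑ j, (pd j ut y + (Pi.single i 1 : Fin n → ℝ) j) ^ 2)
      = (∫ y in unitCube n, q * α ^ q * m y ^ (q - 1) * mt y ^ 2)
        + (∫ y in unitCube n,
            m y * ∑ j, pd j ut y * (pd j ut y + (Pi.single i 1 : Fin n → ℝ) j))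
        + (∫ y in unitCube n, m y * pd i ut y) + 1 := by
    have : (fun y => q * α ^ q * (m y) ^ (q - 1) * (mt y) ^ 2
        + m y * ∑ j, (pd j ut y + (Pi.single i 1 : Fin n → ℝ) j) ^ 2)
        = fun y => (q * α ^ q * m y ^ (q - 1) * mt y ^ 2
            + m y * (∑ j, pd j ut y * (pd j ut y + (Pi.single i 1 : Fin n → ℝ) j))
            + m y * pd i ut y) + m y := by
      funext y
      rw [hsq y]; ring
    have K2 : IntegrableOn
        (fun y => m y * ∑ j, pd j ut y * (pd j ut y + (Pi.single i 1 : Fin n → ℝ) j))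
        (unitCube n) := hci (cm.mul cS4)
    have K1 : IntegrableOn (fun y => q * α ^ q * m y ^ (q - 1) * mt y ^ 2) (unitCube n) :=
      hci cg1
    have K3 : IntegrableOn (fun y => m y * pd i ut y) (unitCube n) := hci (cm.mul cpdiut)
    have K4 : IntegrableOn m (unitCube n) := hci cm
    have K12 : IntegrableOn
        (fun y => q * α ^ q * m y ^ (q - 1) * mt y ^ 2
          + m y * ∑ j, pd j ut y * (pd j ut y + (Pi.single i 1 : Fin n → ℝ) j))
        (unitCube n) := K1.add K2
    have K123 : IntegrableOn
        (fun y => q * α ^ q * m y ^ (q - 1) * mt y ^ 2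
          + m y * ∑ j, pd j ut y * (pd j ut y + (Pi.single i 1 : Fin n → ℝ) j)
          + m y * pd i ut y)
        (unitCube n) := K12.add K3
    rw [this, integral_add K123 K4, integral_add K12 K3, integral_add K1 K2, hmmean]
  have hLHS : ∫ y in unitCube n, (mt y * pd i u y + m y * pd i ut y)
      = (∫ y in unitCube n, mt y * pd i u y) + ∫ y in unitCube n, m y * pd i ut y := by
    have L1 : IntegrableOn (fun y => mt y * pd i u y) (unitCube n) := hci (cmt.mul cpdiu)
    have L2 : IntegrableOn (fun y => m y * pd i ut y) (unitCube n) := hci (cm.mul cpdiut)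
    exact integral_add L1 L2
  have hmain : (1 + ∫ y in unitCube n, (mt y * pd i u y + m y * pd i ut y))
      = ∫ y in unitCube n,
          (q * α ^ q * (m y) ^ (q - 1) * (mt y) ^ 2
            + m y * ∑ j, (pd j ut y + (Pi.single i 1 : Fin n → ℝ) j) ^ 2) := by
    rw [hRHS, hLHS]
    linarith [hI]
  refine ⟨hmain, ?_⟩
  rw [hmain]
  apply setIntegral_nonneg (by exact measurableSet_Icc)
  intro y _
  have h1 : 0 ≤ q * α ^ q * (m y) ^ (q - 1) * (mt y) ^ 2 :=
    mul_nonneg (mul_nonneg (mul_nonneg hq.le (Real.rpow_nonneg hα.le q))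
      (Real.rpow_nonneg (hmpos y).le _)) (sq_nonneg _)
  have h2 : 0 ≤ m y * ∑ j, (pd j ut y + (Pi.single i 1 : Fin n → ℝ) j) ^ 2 :=
    mul_nonneg (hmpos y).le (Finset.sum_nonneg fun j _ => sq_nonneg _)
  linarith
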